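/- Let a, b ∈ ℂ with |a|² + |b|² = 1 and let U be the qubit unitary U = [[a, b], [−conj(b), conj(a)]]. Then the de-cohering power of U in the relative entropy of coherence equals 1 − H(1/2 + |a||b|): the value 1 − H(1/2 + |a||b|) is the greatest element of the set { 1 − H(|(U ψ_θ)₀|²) : θ ∈ ℝ }, where (U ψ_θ)₀ denotes the first component of U ψ_θ. -/

import Mathlib

open Matrix BigOperators ComplexOrder

/-- The l1-coherence of a matrix: the sum of the absolute values of its
off-diagonal entries. -/
noncomputable def Cl1 {n : ℕ} (A : Matrix (Fin n) (Fin n) ℂ) : ℝ :=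
  ∑ i, ∑ j, if i ≠ j then ‖A i j‖ else 0

/-- A density matrix: positive semidefinite with trace 1. -/
def IsDensity {n : ℕ} (ρ : Matrix (Fin n) (Fin n) ℂ) : Prop :=
  ρ.PosSemidef ∧ ρ.trace = 1

/-- A quantum operation (CPTP map) given by a finite family of Kraus operators. -/
def IsQuantumOp {n : ℕ} (Φ : Matrix (Fin n) (Fin n) ℂ → Matrix (Fin n) (Fin n) ℂ) : Prop :=
  ∃ (m : ℕ) (K : Fin m → Matrix (Fin n) (Fin n) ℂ),
    (∑ i, (K i)ᴴ * K i) = 1 ∧ ∀ ρ, Φ ρ = ∑ i, K i * ρ * (K i)ᴴ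

/-- The dephasing map `Δ`, keeping only the diagonal part of a matrix. -/
def Deph {n : ℕ} (A : Matrix (Fin n) (Fin n) ℂ) : Matrix (Fin n) (Fin n) ℂ :=
  Matrix.of fun i j => if i = j then A i j else 0

/-- The maximally coherent qubit state vector `(1/√2)(1, e^{iθ})`. -/
noncomputable def psi (θ : ℝ) : Fin 2 → ℂ :=
  ![1 / (Real.sqrt 2 : ℂ), Complex.exp (θ * Complex.I) / (Real.sqrt 2 : ℂ)]

/-- The outer product `w w†` of a vector with itself. -/
def outer {n : ℕ} (w : Fin n → ℂ) : Matrix (Fin n) (Fin n) ℂ :=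
  Matrix.vecMulVec w (star w)

/-- The qubit unitary `[[a, b], [-conj b, conj a]]`. -/
def Uab (a b : ℂ) : Matrix (Fin 2) (Fin 2) ℂ :=
  !![a, b; -(starRingEnd ℂ) b, (starRingEnd ℂ) a]

/-- The binary entropy (base 2), with the convention `0 · log 0 = 0`. -/
noncomputable def H (x : ℝ) : ℝ :=
  -(x * Real.logb 2 x) - (1 - x) * Real.logb 2 (1 - x)

/-
Write `z = conj a * b`. The first component of `U ψ_θ` is `(a + b e^{iθ}) / √2`, whose squared modulus
is `1/2 + Re (z e^{iθ})`. As `θ` varies, `Re (z e^{iθ})` sweeps out `[-|z|, |z|]` with `|z| = |a||b| ≤ 1/2`.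
Since `H` is symmetric about `1/2` and decreasing on `[1/2, 1]`, the coherence decrease
`1 - H(1/2 + Re (z e^{iθ}))` is largest when `Re (z e^{iθ}) = |z|`, i.e. for `θ = -arg z`.
-/

open Complex

lemma H_eq_binEntropy_div_log_two (x : ℝ) : H x = Real.binEntropy x / Real.log 2 := by
  unfold H Real.binEntropy Real.logb
  rw [Real.log_inv, Real.log_inv]
  ring

lemma H_one_sub (x : ℝ) : H (1 - x) = H x := by
  rw [H_eq_binEntropy_div_log_two, H_eq_binEntropy_div_log_two, Real.binEntropy_one_sub]

lemma H_antitoneOn : AntitoneOn H (Set.Icc (1 / 2) 1) := by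
  intro x hx y hy hxy
  rw [H_eq_binEntropy_div_log_two, H_eq_binEntropy_div_log_two]
  have hbin := Real.binEntropy_strictAntiOn.antitoneOn
    ⟨by linarith [hx.1], hx.2⟩ ⟨by linarith [hy.1], hy.2⟩ hxy
  gcongr

lemma H_half_add_abs (r : ℝ) : H (1 / 2 + |r|) = H (1 / 2 + r) := by
  rcases abs_choice r with h | h
  · rw [h]
  · rw [h, ← H_one_sub]
    ring_nf

lemma H_half_add_le_of_abs_le {r t : ℝ} (hrt : |r| ≤ t) (ht : t ≤ 1 / 2) :
    H (1 / 2 + t) ≤ H (1 / 2 + r) := by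
  rw [← H_half_add_abs r]
  have hr := abs_nonneg r
  exact H_antitoneOn ⟨by linarith, by linarith⟩ ⟨by linarith, by linarith⟩ (by linarith)

lemma exists_re_mul_exp_eq_norm (z : ℂ) : ∃ θ : ℝ, (z * exp (θ * I)).re = ‖z‖ := by
  refine ⟨-arg z, ?_⟩
  calc (z * exp ((-arg z : ℝ) * I)).re
      = (‖z‖ * exp (arg z * I) * exp (-(arg z * I))).re := by
        rw [norm_mul_exp_arg_mul_I]
        push_cast
        ring_nf
    _ = ‖z‖ := by
        rw [mul_assoc, ← Complex.exp_add, add_neg_cancel, Complex.exp_zero, mul_one, ofReal_re]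

lemma abs_re_mul_exp_le_norm (z : ℂ) (θ : ℝ) : |(z * exp (θ * I)).re| ≤ ‖z‖ := by
  simpa [norm_exp_ofReal_mul_I] using abs_re_le_norm (z * exp (θ * I))

lemma Uab_mulVec_psi_zero (a b : ℂ) (θ : ℝ) :
    (Uab a b).mulVec (psi θ) 0 = (a + b * exp (θ * I)) / (Real.sqrt 2 : ℂ) := by
  simp only [Uab, psi, mulVec, dotProduct, Fin.sum_univ_two, of_apply, cons_val', cons_val_zero,
    cons_val_one, empty_val', cons_val_fin_one]
  ring

lemma norm_sq_Uab_mulVec_psi_zero {a b : ℂ} (hab : ‖a‖ ^ 2 + ‖b‖ ^ 2 = 1) (θ : ℝ) :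
    ‖(Uab a b).mulVec (psi θ) 0‖ ^ 2 = 1 / 2 + ((starRingEnd ℂ) a * b * exp (θ * I)).re := by
  have hcross : (a * (starRingEnd ℂ) (b * exp (θ * I))).re
      = ((starRingEnd ℂ) a * b * exp (θ * I)).re := by
    rw [← conj_re ((starRingEnd ℂ) a * b * exp (θ * I))]
    simp only [map_mul, conj_conj]
    ring_nf
  have hexp : normSq (exp (θ * I)) = 1 := by
    rw [← Complex.sq_norm, norm_exp_ofReal_mul_I, one_pow]
  have hsqrt : normSq (Real.sqrt 2 : ℂ) = 2 := by
    rw [normSq_ofReal, Real.mul_self_sqrt zero_le_two]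
  have hab' : normSq a + normSq b = 1 := by rwa [← Complex.sq_norm, ← Complex.sq_norm]
  rw [Uab_mulVec_psi_zero, Complex.sq_norm, normSq_div, normSq_add, normSq_mul, hexp, hcross, hsqrt]
  linear_combination hab' / 2

theorem decohering_power_relent_qubit_unitary
    (a b : ℂ) (hab : ‖a‖ ^ 2 + ‖b‖ ^ 2 = 1) :
    IsGreatest
      {x : ℝ | ∃ θ : ℝ, x = 1 - H (‖(Uab a b).mulVec (psi θ) 0‖ ^ 2)}
      (1 - H (1 / 2 + ‖a‖ * ‖b‖)) := by
  have hnorm : ‖(starRingEnd ℂ) a * b‖ = ‖a‖ * ‖b‖ := by rw [norm_mul, norm_conj]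
  constructor
  · obtain ⟨θ, hθ⟩ := exists_re_mul_exp_eq_norm ((starRingEnd ℂ) a * b)
    exact ⟨θ, by rw [norm_sq_Uab_mulVec_psi_zero hab, hθ, hnorm]⟩
  · rintro x ⟨θ, rfl⟩
    have hamgm : ‖a‖ * ‖b‖ ≤ 1 / 2 := by nlinarith [sq_nonneg (‖a‖ - ‖b‖)]
    have hre := abs_re_mul_exp_le_norm ((starRingEnd ℂ) a * b) θ
    rw [hnorm] at hre
    rw [norm_sq_Uab_mulVec_psi_zero hab]
    linarith [H_half_add_le_of_abs_le hre hamgm]
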